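/- Let X ⊆ ℕ and suppose hX = kX for some distinct h, k ∈ ℕ (n-fold sumsets). Then nX = (n+1)X for all sufficiently large n. -/
import Mathlib


open Pointwise

/-- `nsum X n` is the `n`-fold sumset of `X ⊆ ℕ`, with `nsum X 0 = {0}`. -/
def nsum (X : Set ℕ) : ℕ → Set ℕ
  | 0 => {0}
  | n + 1 => nsum X n + X

lemma nsum_eq_nsmul (X : Set ℕ) : ∀ n, nsum X n = n • X
  | 0 => by rw [nsum, zero_smul]; rfl
  | n + 1 => by rw [nsum, nsum_eq_nsmul X n, succ_nsmul]

lemma mul_mem_nsmul {X : Set ℕ} {a : ℕ} (ha : a ∈ X) : ∀ n, n * a ∈ n • X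
  | 0 => by rw [Nat.zero_mul, zero_smul]; rfl
  | n + 1 => by
    rw [succ_nsmul, Nat.succ_mul]
    exact Set.add_mem_add (mul_mem_nsmul ha n) ha

lemma nsmul_lower {X : Set ℕ} (h0 : 0 ∉ X) : ∀ n, ∀ z ∈ n • X, n ≤ z
  | 0, z, _ => Nat.zero_le z
  | n + 1, z, hz => by
    rw [succ_nsmul] at hz
    obtain ⟨y, hy, x, hx, rfl⟩ := hz
    have h1 : 1 ≤ x := Nat.one_le_iff_ne_zero.mpr (fun hc => h0 (hc ▸ hx))
    exact Nat.add_le_add (nsmul_lower h0 n y hy) h1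

lemma stable (A B : Set ℕ) (hAB : A = A + B) (m : ℕ) : A = A + m • B := by
  induction m with
  | zero => simp
  | succ m ih => rw [succ_nsmul, ← add_assoc, ← ih]; exact hAB

lemma nsmul_mono {X : Set ℕ} (h0 : 0 ∈ X) {m n : ℕ} (h : m ≤ n) : m • X ⊆ n • X := by
  obtain ⟨j, rfl⟩ := Nat.exists_eq_add_of_le h
  rw [add_nsmul]
  intro x hx
  have hz : (0 : ℕ) ∈ j • X := by simpa using mul_mem_nsmul h0 j
  exact ⟨x, hx, 0, hz, add_zero x⟩

lemma key (X : Set ℕ) (a : ℕ) (ha : a ∈ X) (h k : ℕ) (hlt : h < k)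
    (heq : h • X = k • X) : ∀ n ≥ h, n • X = (n + 1) • X := by
  set d := k - h with hd
  have hdpos : 1 ≤ d := by omega
  have hst : h • X = h • X + d • X := by
    conv_lhs => rw [heq]
    rw [← add_nsmul]
    congr 1
    omega
  -- show 0 ∈ X
  have h0 : 0 ∈ X := by
    by_contra h0
    set m := h * a + 1 with hm
    have hAm : h • X = h • X + (m * d) • X := by
      rw [mul_comm, mul_nsmul]
      exact stable _ _ hst m
    have hmem : h * a ∈ h • X := mul_mem_nsmul ha h
    rw [hAm] at hmem
    obtain ⟨y, _, z, hz, hyz0⟩ := hmem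
    have hyz : y + z = h * a := hyz0
    have hzge : m * d ≤ z := nsmul_lower h0 _ z hz
    have : m ≤ m * d := Nat.le_mul_of_pos_right m hdpos
    omega
  intro n hn
  have hper : n • X = (n + d) • X := by
    have h1 : n • X = (n - h) • X + h • X := by
      rw [← add_nsmul]; congr 1; omega
    have h2 : (n - h) • X + k • X = (n + d) • X := by
      rw [← add_nsmul]; congr 1; omega
    rw [h1, heq, h2]
  apply Set.Subset.antisymm
  · exact nsmul_mono h0 (Nat.le_succ n)
  · rw [hper]
    exact nsmul_mono h0 (by omega)

lemma nsmul_empty : ∀ n, 1 ≤ n → n • (∅ : Set ℕ) = ∅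
  | 1, _ => one_nsmul _
  | n + 2, _ => by rw [succ_nsmul, Set.add_empty]

theorem stmt_11 (X : Set ℕ) (h k : ℕ) (hhk : h ≠ k) (heq : nsum X h = nsum X k) :
    ∃ N : ℕ, ∀ n ≥ N, nsum X n = nsum X (n + 1) := by
  simp only [nsum_eq_nsmul] at heq ⊢
  rcases X.eq_empty_or_nonempty with rfl | ⟨a, ha⟩
  · exact ⟨1, fun n hn => by rw [nsmul_empty n hn, nsmul_empty (n + 1) (by omega)]⟩
  · rcases hhk.lt_or_gt with hlt | hlt
    · exact ⟨h, key X a ha h k hlt heq⟩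
    · exact ⟨k, key X a ha k h hlt heq.symm⟩
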